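/- arXiv:0902.0038 — 2 statements merged into one kernel-verified Lean document; each statement's English description precedes it below -/
import Mathlib

section
/- Let K be a field of characteristic zero and L = Der(K[x, x⁻¹]) the two-sided Witt algebra, i.e., the Lie algebra of derivations of the Laurent polynomial algebra, with basis eₙ = x^{n+1} d/dx (n ∈ ℤ) and bracket [eₘ, eₙ] = (n − m) e_{m+n}. Then every invariant symmetric bilinear form on L vanishes identically. -/
/-!
Invariance under `e 0 = x d/dx`, which acts on `e n` by the weight `n`, forces
`ω (e m) (e n) = 0` unless `m + n = 0`. Invariance under `e (m - n)` applied to `e n` and `e (-m)`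
gives `(2n - m) ω(e m, e (-m)) + (n - 2m) ω(e n, e (-n)) = 0`; taking `n = 2m`, and then
`m = 0, n = 1`, kills the remaining pairings. Finally the `e n = x ^ n • x d/dx` span all
derivations of `K[x, x⁻¹]`, because a derivation is determined by its value on `x`.
-/

open LaurentPolynomial

section WittRelations

variable {R L M : Type*} [CommRing R] [LieRing L] [Module R L] [AddCommGroup M] [Module R M]

def SatisfiesWittRelations (e : ℤ → L) : Prop :=
  ∀ m n : ℤ, ⁅e m, e n⁆ = (n - m) • e (m + n)

def LinearMap.IsLieInvariant (ω : L →ₗ[R] L →ₗ[R] M) : Prop :=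
  ∀ x y z : L, ω ⁅z, x⁆ y + ω x ⁅z, y⁆ = 0

namespace LinearMap.IsLieInvariant

variable {e : ℤ → L} {ω : L →ₗ[R] L →ₗ[R] M}

lemma witt_pairing_relation (hω : ω.IsLieInvariant) (he : SatisfiesWittRelations e) (m n : ℤ) :
    (2 * n - m) • ω (e m) (e (-m)) + (n - 2 * m) • ω (e n) (e (-n)) = 0 := by
  have h := hω (e n) (e (-m)) (e (m - n))
  rwa [he, he, sub_add_cancel, show m - n + -m = -n by ring, map_zsmul, LinearMap.smul_apply,
    map_zsmul, show n - (m - n) = 2 * n - m by ring, show -m - (m - n) = n - 2 * m by ring] at h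

variable [IsAddTorsionFree M]

lemma apply_witt_eq_zero_of_add_ne_zero (hω : ω.IsLieInvariant) (he : SatisfiesWittRelations e)
    {m n : ℤ} (hmn : m + n ≠ 0) : ω (e m) (e n) = 0 := by
  have h := hω (e m) (e n) (e 0)
  simp only [he _ _, sub_zero, zero_add, map_zsmul, LinearMap.smul_apply, ← add_smul] at h
  exact (IsAddTorsionFree.zsmul_eq_zero_iff_right hmn).mp h

lemma apply_witt_neg_eq_zero (hω : ω.IsLieInvariant) (he : SatisfiesWittRelations e) (m : ℤ) :
    ω (e m) (e (-m)) = 0 := by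
  have hne : ∀ k : ℤ, k ≠ 0 → ω (e k) (e (-k)) = 0 := fun k hk => by
    have h := hω.witt_pairing_relation he k (2 * k)
    rw [show 2 * (2 * k) - k = 3 * k by ring, sub_self, zero_smul, add_zero] at h
    exact (IsAddTorsionFree.zsmul_eq_zero_iff_right (by omega)).mp h
  rcases eq_or_ne m 0 with rfl | hm
  · have h := hω.witt_pairing_relation he 0 1
    rw [hne 1 one_ne_zero, smul_zero, add_zero] at h
    exact (IsAddTorsionFree.zsmul_eq_zero_iff_right (by norm_num)).mp h
  · exact hne m hm

lemma apply_witt_eq_zero (hω : ω.IsLieInvariant) (he : SatisfiesWittRelations e) (m n : ℤ) :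
    ω (e m) (e n) = 0 := by
  rcases eq_or_ne (m + n) 0 with hmn | hmn
  · rw [eq_neg_of_add_eq_zero_right hmn]
    exact hω.apply_witt_neg_eq_zero he m
  · exact hω.apply_witt_eq_zero_of_add_ne_zero he hmn

lemma eq_zero_of_span_witt_eq_top (hω : ω.IsLieInvariant) (he : SatisfiesWittRelations e)
    (hspan : Submodule.span R (Set.range e) = ⊤) : ω = 0 :=
  LinearMap.ext_on_range hspan fun m => LinearMap.ext_on_range hspan fun n =>
    hω.apply_witt_eq_zero he m n

end LinearMap.IsLieInvariant

end WittRelations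

namespace LaurentPolynomial

variable (R : Type*) [CommRing R]

lemma basis_eq_T (n : ℤ) : AddMonoidAlgebra.basis ℤ R n = T n := rfl

lemma span_range_T : Submodule.span R (Set.range (T : ℤ → R[T;T⁻¹])) = ⊤ :=
  (AddMonoidAlgebra.basis ℤ R).span_eq

lemma adjoin_T_one_T_neg_one : Algebra.adjoin R {(T 1 : R[T;T⁻¹]), T (-1)} = ⊤ := by
  have hT : ∀ n, (T n : R[T;T⁻¹]) ∈ Algebra.adjoin R {T 1, T (-1)} := by
    intro n
    induction n using Int.induction_on with
    | zero => simpa only [T_zero] using one_mem _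
    | succ n ih => rw [T_add]; exact mul_mem ih (Algebra.subset_adjoin (by simp))
    | pred n ih => rw [sub_eq_add_neg, T_add]; exact mul_mem ih (Algebra.subset_adjoin (by simp))
  rw [← Algebra.toSubmodule_eq_top, eq_top_iff, ← span_range_T, Submodule.span_le]
  rintro _ ⟨n, rfl⟩
  exact hT n

variable {R} in
lemma derivation_ext_of_apply_T_one {M : Type*} [AddCommGroup M] [Module R[T;T⁻¹] M]
    [Module R M] [IsScalarTower R R[T;T⁻¹] M] {D₁ D₂ : Derivation R R[T;T⁻¹] M}
    (h : D₁ (T 1) = D₂ (T 1)) : D₁ = D₂ := by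
  have hinv : (T (-1) : R[T;T⁻¹]) * T 1 = 1 := by rw [← T_add, neg_add_cancel, T_zero]
  refine Derivation.ext_of_adjoin_eq_top _ (adjoin_T_one_T_neg_one R) ?_
  rintro _ (rfl | rfl)
  · exact h
  · rw [D₁.leibniz_of_mul_eq_one hinv, D₂.leibniz_of_mul_eq_one hinv, h]

-- `x d/dx`
noncomputable def eulerDerivation : Derivation R R[T;T⁻¹] R[T;T⁻¹] where
  toLinearMap := (AddMonoidAlgebra.basis ℤ R).constr R fun n => n • T n
  map_one_eq_zero' := by
    rw [← T_zero, ← basis_eq_T, Module.Basis.constr_basis, zero_smul]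
  leibniz' p q := by
    set D := (AddMonoidAlgebra.basis ℤ R).constr R fun n : ℤ => n • (T n : R[T;T⁻¹])
    have hD (n : ℤ) : D (T n) = n • T n := (AddMonoidAlgebra.basis ℤ R).constr_basis R _ n
    have h : (LinearMap.mul R R[T;T⁻¹]).compr₂ D =
        (LinearMap.mul R _).compl₂ D + ((LinearMap.mul R _).compl₂ D).flip := by
      refine (AddMonoidAlgebra.basis ℤ R).ext fun m => (AddMonoidAlgebra.basis ℤ R).ext fun n => ?_
      simp only [basis_eq_T, LinearMap.compr₂_apply, LinearMap.mul_apply', LinearMap.add_apply,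
        LinearMap.flip_apply, LinearMap.compl₂_apply]
      rw [← T_add, hD, hD, hD, mul_smul_comm, mul_smul_comm, ← T_add, ← T_add, add_comm n m,
        ← add_smul, add_comm (n : ℤ)]
    exact congr($h p q)

lemma eulerDerivation_T (n : ℤ) : eulerDerivation R (T n) = n • T n :=
  (AddMonoidAlgebra.basis ℤ R).constr_basis R _ n

lemma derivation_eq_smul_eulerDerivation (D : Derivation R R[T;T⁻¹] R[T;T⁻¹]) :
    D = (T (-1) * D (T 1)) • eulerDerivation R := by
  refine derivation_ext_of_apply_T_one ?_
  rw [Derivation.smul_apply, eulerDerivation_T, one_smul, smul_eq_mul, mul_right_comm, ← T_add,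
    neg_add_cancel, T_zero, one_mul]

-- `e n = x ^ (n + 1) d/dx`
noncomputable def wittDerivation (n : ℤ) : Derivation R R[T;T⁻¹] R[T;T⁻¹] :=
  (T n : R[T;T⁻¹]) • eulerDerivation R

lemma wittDerivation_T (n k : ℤ) : wittDerivation R n (T k) = k • T (n + k) := by
  rw [wittDerivation, Derivation.smul_apply, eulerDerivation_T, smul_eq_mul, mul_smul_comm, T_add]

lemma satisfiesWittRelations_wittDerivation : SatisfiesWittRelations (wittDerivation R) := by
  intro m n
  refine derivation_ext_of_apply_T_one ?_
  rw [Derivation.commutator_apply, Derivation.smul_apply, wittDerivation_T, wittDerivation_T,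
    map_zsmul, map_zsmul, wittDerivation_T, wittDerivation_T, wittDerivation_T, one_smul, one_smul,
    smul_smul, show n + (m + 1) = m + (n + 1) by ring, show m + n + 1 = m + (n + 1) by ring,
    ← sub_smul]
  congr 1
  ring

lemma span_range_wittDerivation : Submodule.span R (Set.range (wittDerivation R)) = ⊤ := by
  let f : R[T;T⁻¹] →ₗ[R] Derivation R R[T;T⁻¹] R[T;T⁻¹] :=
    (LinearMap.toSpanSingleton R[T;T⁻¹] _ (eulerDerivation R)).restrictScalars R
  have hf : Set.range (wittDerivation R) = f '' Set.range T := by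
    rw [← Set.range_comp]
    rfl
  rw [hf, Submodule.span_image, span_range_T, Submodule.map_top, LinearMap.range_eq_top]
  exact fun D => ⟨_, (derivation_eq_smul_eulerDerivation R D).symm⟩

end LaurentPolynomial

theorem invariant_forms_vanish_on_two_sided_Witt_general
    (K : Type*) [Field K] [CharZero K]
    (ω : Derivation K (LaurentPolynomial K) (LaurentPolynomial K) →ₗ[K]
         Derivation K (LaurentPolynomial K) (LaurentPolynomial K) →ₗ[K] K)
    (hinv : ∀ x y z : Derivation K (LaurentPolynomial K) (LaurentPolynomial K),
      ω ⁅z, x⁆ y + ω x ⁅z, y⁆ = 0) :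
    ω = 0 :=
  LinearMap.IsLieInvariant.eq_zero_of_span_witt_eq_top hinv
    (satisfiesWittRelations_wittDerivation K) (span_range_wittDerivation K)

/-- Every invariant symmetric bilinear form on the two-sided Witt algebra
`Der(K[x,x⁻¹])` (the Lie algebra of derivations of the Laurent polynomial algebra)
over a field of characteristic zero vanishes identically. -/
theorem invariant_forms_vanish_on_two_sided_Witt
    (K : Type*) [Field K] [CharZero K]
    (ω : Derivation K (LaurentPolynomial K) (LaurentPolynomial K) →ₗ[K]
         Derivation K (LaurentPolynomial K) (LaurentPolynomial K) →ₗ[K] K)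
    (hsym : ∀ x y : Derivation K (LaurentPolynomial K) (LaurentPolynomial K),
      ω x y = ω y x)
    (hinv : ∀ x y z : Derivation K (LaurentPolynomial K) (LaurentPolynomial K),
      ω ⁅z, x⁆ y + ω x ⁅z, y⁆ = 0) :
    ω = 0 :=
  invariant_forms_vanish_on_two_sided_Witt_general K ω hinv
end

section
/- Let K be a field of characteristic p > 3 and let W₁(1) = Der(K[x]/(x^p)) be the Witt algebra, with basis eᵢ = x^{i+1} d/dx for i = −1, 0, 1, …, p−2 and bracket [eᵢ, eⱼ] = (j − i)e_{i+j} (where e_k = 0 for k outside the range). Then every invariant symmetric bilinear form on W₁(1) vanishes. -/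
/-!
Every derivation `E` of `K[x]/(xᵖ)` equals `(E x) ∂`, and the `xᵃ` span, so an invariant form is
determined by its Gram matrix `c a b = ω(xᵃ ∂, xᵇ ∂)`. Invariance under `ad(xᵏ ∂)`, where
`[xᵏ ∂, xᵃ ∂] = (a - k) x^{a+k-1} ∂`, gives linear relations among the `c a b`: `k = 1` kills
`c a b` unless `a + b = 2` in `K`; `k = 0` kills the remaining entries with `b ≤ 1`; and when
`a + b = 0` the relations for `k = 2, 3` linking `c a (b+2)`, `c (a+1) (b+1)`, `c (a+2) b` have
determinant `-12`, a unit because `p > 3`.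
-/

set_option synthInstance.maxHeartbeats 1000000
set_option maxHeartbeats 1000000
open Polynomial

abbrev TruncPoly (K : Type*) [Field K] (p : ℕ) :=
  Polynomial K ⧸ Ideal.span {(X : Polynomial K) ^ p}

namespace Derivation

variable {R A : Type*} [CommRing R] [CommRing A] [Algebra R A]

theorem lie_smul_smul (D : Derivation R A A) (f g : A) :
    ⁅f • D, g • D⁆ = (f * D g - g * D f) • D := by
  ext a
  simp only [commutator_apply, smul_apply, leibniz, smul_eq_mul]
  ring

theorem pow_smul_lie_pow_smul {D : Derivation R A A} {x : A} (hD : D x = 1) (k a : ℕ) :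
    ⁅x ^ k • D, x ^ a • D⁆ = ((a : R) - k) • x ^ (a + k - 1) • D := by
  have coeff : x ^ k * (a • x ^ (a - 1)) - x ^ a * (k • x ^ (k - 1)) =
      ((a : R) - k) • x ^ (a + k - 1) := by
    rw [sub_smul, Nat.cast_smul_eq_nsmul, Nat.cast_smul_eq_nsmul]
    rcases a with _ | a <;> rcases k with _ | k <;> simp [pow_succ]
    ring
  rw [lie_smul_smul, leibniz_pow, leibniz_pow, hD, smul_eq_mul, smul_eq_mul, mul_one, mul_one,
    coeff, smul_assoc]

theorem smul_eq_of_adjoin_eq_top {D : Derivation R A A} {x : A} (hx : Algebra.adjoin R {x} = ⊤)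
    (hD : D x = 1) (E : Derivation R A A) : E x • D = E :=
  ext_of_adjoin_eq_top {x} hx <| Set.eqOn_singleton.mpr <| by
    rw [smul_apply, hD, smul_eq_mul, mul_one]

theorem eq_zero_of_forall_pow_smul {M : Type*} [AddCommGroup M] [Module R M]
    {D : Derivation R A A} {x : A} (hx : Algebra.adjoin R {x} = ⊤) (hD : D x = 1)
    (ω : Derivation R A A →ₗ[R] Derivation R A A →ₗ[R] M)
    (h : ∀ a b : ℕ, ω (x ^ a • D) (x ^ b • D) = 0) : ω = 0 := by
  let Φ : A →ₗ[R] Derivation R A A := (LinearMap.toSpanSingleton A _ D).restrictScalars R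
  have hspan : Submodule.span R (Submonoid.powers x : Set A) = ⊤ := by
    rw [Submonoid.powers_eq_closure, ← Algebra.adjoin_eq_span, hx, Algebra.top_toSubmodule]
  have hΦ : ω.compl₁₂ Φ Φ = 0 := by
    refine LinearMap.ext_on hspan fun _ ⟨a, ha⟩ ↦ LinearMap.ext_on hspan fun _ ⟨b, hb⟩ ↦ ?_
    simpa [← ha, ← hb, Φ] using h a b
  ext E F
  rw [← smul_eq_of_adjoin_eq_top hx hD E, ← smul_eq_of_adjoin_eq_top hx hD F]
  exact LinearMap.congr_fun₂ hΦ (E x) (F x)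

end Derivation

section WittRelations

variable {R : Type*} [CommRing R]

/-- Invariance of a Gram matrix `c a b = ω(xᵃ ∂, xᵇ ∂)` under `ad(xᵏ ∂)`. The truncated
`a + k - 1` only matters when `a = k = 0`, where its coefficient vanishes. -/
def IsWittInvariant (c : ℕ → ℕ → R) : Prop :=
  ∀ k a b : ℕ, ((a : R) - k) * c (a + k - 1) b + ((b : R) - k) * c a (b + k - 1) = 0

namespace IsWittInvariant

variable [NoZeroDivisors R] {c : ℕ → ℕ → R} (hc : IsWittInvariant c)
include hc

theorem eq_zero_of_add_ne_two {a b : ℕ} (h : (a + b : R) ≠ 2) : c a b = 0 := by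
  have h1 := hc 1 a b
  simp only [Nat.add_sub_cancel, Nat.cast_one] at h1
  refine (mul_eq_zero.mp ?_).resolve_left (sub_ne_zero.mpr h)
  linear_combination h1

theorem apply_zero_right {a : ℕ} (h : (a + 1 : R) ≠ 0) : c a 0 = 0 := by
  have h0 := hc 0 (a + 1) 0
  simp only [Nat.add_sub_cancel, Nat.cast_zero, sub_zero, sub_self, zero_mul, add_zero,
    Nat.cast_add, Nat.cast_one] at h0
  exact (mul_eq_zero.mp h0).resolve_left h

theorem apply_one_right {a : ℕ} (h1 : (a + 1 : R) ≠ 0) (h2 : (a + 2 : R) ≠ 0) : c a 1 = 0 := by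
  have h0 := hc 0 (a + 1) 1
  simp only [Nat.add_sub_cancel, Nat.sub_self, Nat.cast_zero, sub_zero, Nat.cast_add,
    Nat.cast_one, one_mul, add_zero] at h0
  rw [hc.apply_zero_right (ne_of_eq_of_ne (by push_cast; ring) h2), add_zero] at h0
  exact (mul_eq_zero.mp h0).resolve_left h1

theorem apply_add_two_right (h12 : (12 : R) ≠ 0) {a b : ℕ} (h : (a + b : R) = 0) :
    c a (b + 2) = 0 := by
  have e1 := hc 2 a (b + 1)
  have e2 := hc 2 (a + 1) b
  have e3 := hc 3 a b
  simp only [Nat.reduceSubDiff, Nat.cast_add, Nat.cast_ofNat, Nat.cast_one] at e1 e2 e3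
  rw [eq_neg_of_add_eq_zero_right h] at e1 e2 e3
  refine (mul_eq_zero.mp ?_).resolve_left h12
  linear_combination (((a : R) + 2) * (a - 3)) * e1 + ((a - 2) * (a - 3)) * e2
    - ((a - 2) * (a - 1)) * e3

theorem eq_zero (h2 : (2 : R) ≠ 0) (h3 : (3 : R) ≠ 0) : c = 0 := by
  ext a b
  by_cases hab : (a + b : R) = 2
  · rcases b with _ | _ | b <;> push_cast at hab
    · exact hc.apply_zero_right (ne_of_eq_of_ne (by linear_combination hab) h3)
    · exact hc.apply_one_right (ne_of_eq_of_ne (by linear_combination hab) h2)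
        (ne_of_eq_of_ne (by linear_combination hab) h3)
    · refine hc.apply_add_two_right ?_ (by linear_combination hab)
      exact ne_of_eq_of_ne (by norm_num) (mul_ne_zero (mul_ne_zero h2 h2) h3)
  · exact hc.eq_zero_of_add_ne_two hab

end IsWittInvariant

theorem Derivation.isWittInvariant_pow_smul {A : Type*} [CommRing A] [Algebra R A]
    {D : Derivation R A A} {x : A} (hD : D x = 1)
    (ω : Derivation R A A →ₗ[R] Derivation R A A →ₗ[R] R)
    (hω : ∀ u v w : Derivation R A A, ω ⁅w, u⁆ v + ω u ⁅w, v⁆ = 0) :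
    IsWittInvariant fun a b ↦ ω (x ^ a • D) (x ^ b • D) := fun k a b ↦ by
  have h := hω (x ^ a • D) (x ^ b • D) (x ^ k • D)
  rwa [pow_smul_lie_pow_smul hD, pow_smul_lie_pow_smul hD, ω.map_smul, (ω _).map_smul,
    LinearMap.smul_apply, smul_eq_mul, smul_eq_mul] at h

end WittRelations

namespace TruncPoly

variable (K : Type*) [Field K] (p : ℕ)

noncomputable def root : TruncPoly K p := Ideal.Quotient.mk _ X

theorem adjoin_root_eq_top : Algebra.adjoin K {root K p} = ⊤ :=
  AdjoinRoot.adjoinRoot_eq_top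

variable [CharP K p]

theorem mk_derivative_eq_zero {f : K[X]} (hf : Ideal.Quotient.mkₐ K (Ideal.span {X ^ p}) f = 0) :
    Ideal.Quotient.mkₐ K (Ideal.span {X ^ p}) (derivative' f) = 0 := by
  rw [Ideal.Quotient.mkₐ_eq_mk, Ideal.Quotient.eq_zero_iff_mem, Ideal.mem_span_singleton] at hf ⊢
  obtain ⟨g, rfl⟩ := hf
  simp

noncomputable def derivation : Derivation K (TruncPoly K p) (TruncPoly K p) :=
  Derivation.liftOfSurjective (Ideal.Quotient.mkₐ_surjective K _) fun _ ↦ mk_derivative_eq_zero K p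

theorem derivation_root : derivation K p (root K p) = 1 := by
  rw [root, ← Ideal.Quotient.mkₐ_eq_mk K, derivation, Derivation.liftOfSurjective_apply]
  simp

end TruncPoly

theorem invariant_forms_vanish_on_Witt_algebra_general
    (K : Type*) [Field K] (p : ℕ) [CharP K p] (hp : 3 < p)
    (ω : Derivation K (TruncPoly K p) (TruncPoly K p) →ₗ[K]
         Derivation K (TruncPoly K p) (TruncPoly K p) →ₗ[K] K)
    (hinv : ∀ x y z : Derivation K (TruncPoly K p) (TruncPoly K p),
      ω ⁅z, x⁆ y + ω x ⁅z, y⁆ = 0) :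
    ω = 0 := by
  have natCast_ne_zero (n : ℕ) (h0 : 0 < n) (hn : n < p) : (n : K) ≠ 0 := by
    rw [ne_eq, CharP.cast_eq_zero_iff K p]
    exact Nat.not_dvd_of_pos_of_lt h0 hn
  have hc := (Derivation.isWittInvariant_pow_smul (TruncPoly.derivation_root K p) ω hinv).eq_zero
    (by exact_mod_cast natCast_ne_zero 2 two_pos (by omega))
    (by exact_mod_cast natCast_ne_zero 3 three_pos hp)
  exact Derivation.eq_zero_of_forall_pow_smul (TruncPoly.adjoin_root_eq_top K p)
    (TruncPoly.derivation_root K p) ω fun a b ↦ congrFun₂ hc a b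

/-- Every invariant symmetric bilinear form on the `p`-dimensional Witt algebra
`W₁(1) = Der(K[x]/(x^p))` over a field of characteristic `p > 3` vanishes. -/
theorem invariant_forms_vanish_on_Witt_algebra
    (K : Type*) [Field K] (p : ℕ) [CharP K p] (hp : 3 < p)
    (ω : Derivation K (TruncPoly K p) (TruncPoly K p) →ₗ[K]
         Derivation K (TruncPoly K p) (TruncPoly K p) →ₗ[K] K)
    (hsym : ∀ x y : Derivation K (TruncPoly K p) (TruncPoly K p), ω x y = ω y x)
    (hinv : ∀ x y z : Derivation K (TruncPoly K p) (TruncPoly K p),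
      ω ⁅z, x⁆ y + ω x ⁅z, y⁆ = 0) :
    ω = 0 :=
  invariant_forms_vanish_on_Witt_algebra_general K p hp ω hinv
end
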